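/- Strong bisimilarity is closed under name substitution in microCCS: if P ∼ Q then Pσ ∼ Qσ for every substitution σ mapping names to names. -/
import Mathlib


/-- CCS visible actions: a name `a` or a coname `ā`. -/
inductive Act where
  | inp : ℕ → Act
  | out : ℕ → Act
deriving DecidableEq

/-- The coaction. -/
def Act.co : Act → Act
  | .inp a => .out a
  | .out a => .inp a

/-- MicroCCS processes: nil, prefix, parallel composition. -/
inductive Proc where
  | nil : Proc
  | pre : Act → Proc → Proc
  | par : Proc → Proc → Proc
deriving DecidableEq

/-- Transition labels: a visible action or τ. -/
inductive Lab where
  | act : Act → Lab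
  | tau : Lab
deriving DecidableEq

/-- The standard CCS labelled transition system on microCCS. -/
inductive Step : Proc → Lab → Proc → Prop where
  | pre (η : Act) (P : Proc) : Step (.pre η P) (.act η) P
  | syn {P P' Q Q' : Proc} {η : Act} :
      Step P (.act η) P' → Step Q (.act η.co) Q' →
      Step (.par P Q) .tau (.par P' Q')
  | parL {P P' : Proc} {μ : Lab} (Q : Proc) :
      Step P μ P' → Step (.par P Q) μ (.par P' Q)
  | parR {Q Q' : Proc} {μ : Lab} (P : Proc) :
      Step Q μ Q' → Step (.par P Q) μ (.par P Q')

/-- A (symmetric) bisimulation. -/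
def IsBisim (R : Proc → Proc → Prop) : Prop :=
  (∀ P Q, R P Q → R Q P) ∧
  ∀ P Q μ P', R P Q → Step P μ P' → ∃ Q', Step Q μ Q' ∧ R P' Q'

/-- Strong bisimilarity: the union of all bisimulations. -/
def Bisim (P Q : Proc) : Prop := ∃ R, IsBisim R ∧ R P Q

/-- The size of a process: its number of prefixes. -/
def Proc.size : Proc → ℕ
  | .nil => 0
  | .pre _ P => 1 + P.size
  | .par P Q => P.size + Q.size

/-- Structural congruence: abelian monoid laws for parallel composition. -/
inductive SC : Proc → Proc → Prop where
  | refl (P) : SC P P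
  | symm : SC P Q → SC Q P
  | trans : SC P Q → SC Q R → SC P R
  | comm (P Q) : SC (.par P Q) (.par Q P)
  | assoc (P Q R) : SC (.par P (.par Q R)) (.par (.par P Q) R)
  | unit (P) : SC (.par P .nil) P
  | pre (η) : SC P Q → SC (.pre η P) (.pre η Q)
  | par : SC P P' → SC Q Q' → SC (.par P Q) (.par P' Q')

/-- `pow P k` is the k-fold parallel composition of `P`. -/
def pow (P : Proc) : ℕ → Proc
  | 0 => .nil
  | n+1 => .par P (pow P n)

/-- One step of rewriting with the distribution law
    `η.(P ‖ (η.P)^k) ⇝ (η.P)^{k+1}` (k ≥ 1), modulo structural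
    congruence, in any context. -/
inductive RW : Proc → Proc → Prop where
  | head {η : Act} {P : Proc} {k : ℕ} (hk : 1 ≤ k) :
      RW (.pre η (.par P (pow (.pre η P) k))) (pow (.pre η P) (k+1))
  | pre (η) : RW P P' → RW (.pre η P) (.pre η P')
  | parL (Q) : RW P P' → RW (.par P Q) (.par P' Q)
  | parR (P) : RW Q Q' → RW (.par P Q) (.par P Q')
  | congr : SC P P₁ → RW P₁ P₂ → SC P₂ P' → RW P P'

/-- Reflexive-transitive closure of the distribution rewriting. -/
def Rws : Proc → Proc → Prop := Relation.ReflTransGen RW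

/-- Normal forms for the distribution rewriting. -/
def NF (P : Proc) : Prop := ¬ ∃ P', RW P P'

/-- Prime processes. -/
def IsPrime (P : Proc) : Prop :=
  ¬ Bisim P .nil ∧ ∀ Q R, Bisim P (.par Q R) → Bisim Q .nil ∨ Bisim R .nil

/-- Action of a name substitution on actions. -/
def Act.rename (σ : ℕ → ℕ) : Act → Act
  | .inp a => .inp (σ a)
  | .out a => .out (σ a)

/-- Action of a name substitution on processes. -/
def Proc.rename (σ : ℕ → ℕ) : Proc → Proc
  | .nil => .nil
  | .pre η P => .pre (η.rename σ) (P.rename σ)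
  | .par P Q => .par (P.rename σ) (Q.rename σ)

/- ===================== Auxiliary development ===================== -/

open Multiset in
noncomputable instance : LinearOrder Proc := IsWellOrder.linearOrder WellOrderingRel

/-- Right-nested parallel product of a list of processes. -/
def ofList : List Proc → Proc
  | [] => .nil
  | c :: l => .par c (ofList l)

/-- Canonical multiset of top-level components. -/
noncomputable def canonC : Proc → Multiset Proc
  | .nil => 0
  | .pre η P => {.pre η (ofList ((canonC P).sort (· ≤ ·)))}
  | .par P Q => canonC P + canonC Q

/-- Canonical form. -/
noncomputable def cnorm (P : Proc) : Proc := ofList ((canonC P).sort (· ≤ ·))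

@[simp] lemma canonC_nil : canonC .nil = 0 := rfl
lemma canonC_pre (η P) : canonC (.pre η P) = {.pre η (cnorm P)} := rfl
@[simp] lemma canonC_par (P Q) : canonC (.par P Q) = canonC P + canonC Q := rfl

lemma canonC_ofList (l : List Proc) : canonC (ofList l) = (l.map canonC).sum := by
  induction l with
  | nil => rfl
  | cons c l ih => simp [ofList, ih]

lemma canonC_norm_eq (P : Proc) : canonC (cnorm P) = ((canonC P).map canonC).sum := by
  rw [cnorm, canonC_ofList]
  rw [← Multiset.sum_coe, ← Multiset.map_coe, Multiset.sort_eq]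

lemma canonC_self {P : Proc} : ∀ c ∈ canonC P, canonC c = {c} := by
  induction P with
  | nil => simp
  | pre η B ih =>
    intro c hc
    rw [canonC_pre, Multiset.mem_singleton] at hc
    subst hc
    have hnn : canonC (cnorm B) = canonC B := by
      rw [canonC_norm_eq]
      calc ((canonC B).map canonC).sum = ((canonC B).map (fun c => ({c} : Multiset Proc))).sum :=
            by rw [Multiset.map_congr rfl ih]
        _ = canonC B := by
            induction (canonC B) using Multiset.induction with
            | empty => simp
            | cons a s ihs => simp [ihs]
    have : cnorm (cnorm B) = cnorm B := congrArg (fun m : Multiset Proc => ofList (m.sort (· ≤ ·))) hnn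
    rw [canonC_pre, this]
  | par A B ihA ihB =>
    intro c hc
    rw [canonC_par, Multiset.mem_add] at hc
    rcases hc with h | h
    · exact ihA c h
    · exact ihB c h

lemma canonC_norm (P : Proc) : canonC (cnorm P) = canonC P := by
  rw [canonC_norm_eq]
  calc ((canonC P).map canonC).sum = ((canonC P).map (fun c => ({c} : Multiset Proc))).sum :=
        by rw [Multiset.map_congr rfl canonC_self]
    _ = canonC P := by
        induction (canonC P) using Multiset.induction with
        | empty => simp
        | cons a s ihs => simp [ihs]

lemma cnorm_eq_of_canonC {P Q : Proc} (h : canonC P = canonC Q) : cnorm P = cnorm Q :=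
  congrArg (fun m : Multiset Proc => ofList (m.sort (· ≤ ·))) h

lemma mem_canonC_shape {P c : Proc} (hc : c ∈ canonC P) : ∃ η X, c = .pre η X := by
  induction P with
  | nil => simp at hc
  | pre η B ih => rw [canonC_pre, Multiset.mem_singleton] at hc; exact ⟨η, _, hc⟩
  | par A B ihA ihB =>
    rw [canonC_par, Multiset.mem_add] at hc
    rcases hc with h | h
    · exact ihA h
    · exact ihB h

lemma body_norm_of_mem {P c : Proc} {η X} (hc : c ∈ canonC P) (he : c = .pre η X) :
    cnorm X = X := by
  have h1 := canonC_self c hc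
  subst he
  rw [canonC_pre, Multiset.singleton_inj] at h1
  injection h1 with _ h2

/-- the size of a component multiset -/
def msize (m : Multiset Proc) : ℕ := (m.map Proc.size).sum

lemma size_ofList (l : List Proc) : (ofList l).size = (l.map Proc.size).sum := by
  induction l with
  | nil => rfl
  | cons c l ih => simp [ofList, Proc.size, ih]

lemma size_norm_eq (P : Proc) : (cnorm P).size = msize (canonC P) := by
  rw [cnorm, size_ofList, msize]
  rw [← Multiset.sum_coe, ← Multiset.map_coe, Multiset.sort_eq]

lemma size_canonC (P : Proc) : msize (canonC P) = P.size := by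
  induction P with
  | nil => rfl
  | pre η B ih =>
    rw [canonC_pre]
    show (({Proc.pre η (cnorm B)} : Multiset Proc).map Proc.size).sum = _
    rw [Multiset.map_singleton, Multiset.sum_singleton]
    show 1 + (cnorm B).size = 1 + B.size
    rw [size_norm_eq, ih]
  | par A B ihA ihB =>
    rw [canonC_par, msize, Multiset.map_add, Multiset.sum_add]
    show msize (canonC A) + msize (canonC B) = _
    rw [ihA, ihB]; rfl

lemma size_norm (P : Proc) : (cnorm P).size = P.size := by rw [size_norm_eq, size_canonC]

lemma size_le_of_mem {m : Multiset Proc} {c : Proc} (h : c ∈ m) : c.size ≤ msize m := by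
  rw [msize]
  exact Multiset.le_sum_of_mem (Multiset.mem_map_of_mem _ h)

lemma size_le_of_mem_canonC {P c : Proc} (h : c ∈ canonC P) : c.size ≤ P.size := by
  have := size_le_of_mem h
  rwa [size_canonC] at this

/- ===================== SC ↔ canonC ===================== -/

lemma SC.canonC_eq {P Q : Proc} (h : SC P Q) : canonC P = canonC Q := by
  induction h with
  | refl => rfl
  | symm _ ih => exact ih.symm
  | trans _ _ ih1 ih2 => exact ih1.trans ih2
  | comm P Q => simp [add_comm]
  | assoc P Q R => simp [add_assoc]
  | unit P => simp
  | pre η h ih => rw [canonC_pre, canonC_pre, cnorm_eq_of_canonC ih]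
  | par _ _ ih1 ih2 => simp [ih1, ih2]

lemma sc_ofList_append (l1 l2 : List Proc) :
    SC (.par (ofList l1) (ofList l2)) (ofList (l1 ++ l2)) := by
  induction l1 with
  | nil =>
    show SC (.par .nil _) _
    exact .trans (.comm _ _) (.unit _)
  | cons c l ih =>
    show SC (.par (.par c (ofList l)) (ofList l2)) (.par c (ofList (l ++ l2)))
    exact .trans (.symm (.assoc _ _ _)) (.par (.refl _) ih)

lemma sc_ofList_perm {l1 l2 : List Proc} (h : l1.Perm l2) :
    SC (ofList l1) (ofList l2) := by
  induction h with
  | nil => exact .refl _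
  | cons x _ ih => exact .par (.refl _) ih
  | swap x y l =>
    show SC (.par y (.par x (ofList l))) (.par x (.par y (ofList l)))
    exact .trans (.assoc _ _ _) (.trans (.par (.comm _ _) (.refl _)) (.symm (.assoc _ _ _)))
  | trans _ _ ih1 ih2 => exact .trans ih1 ih2

lemma sc_cnorm (P : Proc) : SC P (cnorm P) := by
  induction P with
  | nil =>
    have : ((0 : Multiset Proc).sort (· ≤ ·)).Perm [] := by
      rw [← Multiset.coe_eq_coe, Multiset.sort_eq]; rfl
    exact sc_ofList_perm this.symm
  | pre η B ih =>
    have h1 : SC (.pre η B) (.pre η (cnorm B)) := .pre η ih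
    have h2 : SC (.pre η (cnorm B)) (ofList [.pre η (cnorm B)]) := by
      show SC _ (.par _ (ofList []))
      exact .symm (.unit _)
    have h3 : (([.pre η (cnorm B)] : List Proc)).Perm ((canonC (.pre η B)).sort (· ≤ ·)) := by
      rw [← Multiset.coe_eq_coe, Multiset.sort_eq, canonC_pre]; rfl
    exact .trans h1 (.trans h2 (sc_ofList_perm h3))
  | par A B ihA ihB =>
    have h1 : SC (.par A B) (.par (cnorm A) (cnorm B)) := .par ihA ihB
    have h2 := sc_ofList_append ((canonC A).sort (· ≤ ·)) ((canonC B).sort (· ≤ ·))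
    have h3 : (((canonC A).sort (· ≤ ·)) ++ ((canonC B).sort (· ≤ ·))).Perm
        ((canonC (.par A B)).sort (· ≤ ·)) := by
      rw [← Multiset.coe_eq_coe, Multiset.sort_eq, canonC_par, ← Multiset.coe_add,
        Multiset.sort_eq, Multiset.sort_eq]
    exact .trans h1 (.trans h2 (sc_ofList_perm h3))

lemma sc_of_canonC {P Q : Proc} (h : canonC P = canonC Q) : SC P Q := by
  have := cnorm_eq_of_canonC h
  exact .trans (sc_cnorm P) (this ▸ .symm (sc_cnorm Q))

lemma sc_iff_canonC {P Q : Proc} : SC P Q ↔ canonC P = canonC Q :=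
  ⟨SC.canonC_eq, sc_of_canonC⟩

/- ===================== Transitions vs canonC ===================== -/

@[simp] lemma Act.co_co (η : Act) : η.co.co = η := by cases η <;> rfl
lemma Act.co_ne (η : Act) : η.co ≠ η := by cases η <;> simp [Act.co]

lemma mcons_eq (a : Proc) (s : Multiset Proc) : a ::ₘ s = {a} + s :=
  (Multiset.singleton_add a s).symm

lemma canonC_of_step_act {P P' : Proc} {η : Act} (h : Step P (.act η) P') :
    ∃ X s, canonC P = (.pre η X) ::ₘ s ∧ canonC P' = canonC X + s := by
  generalize hμ : Lab.act η = μ at h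
  induction h with
  | pre η' B =>
    cases hμ
    refine ⟨cnorm B, 0, ?_, ?_⟩
    · rw [canonC_pre]; rfl
    · rw [canonC_norm, add_zero]
  | syn _ _ => cases hμ
  | parL Q _ ih =>
    obtain ⟨X, s, h1, h2⟩ := ih hμ
    refine ⟨X, s + canonC Q, ?_, ?_⟩
    · rw [canonC_par, h1, mcons_eq, mcons_eq]; abel
    · rw [canonC_par, h2]; abel
  | parR Q _ ih =>
    obtain ⟨X, s, h1, h2⟩ := ih hμ
    refine ⟨X, s + canonC Q, ?_, ?_⟩
    · rw [canonC_par, h1, mcons_eq, mcons_eq]; abel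
    · rw [canonC_par, h2]; abel

lemma canonC_of_step_tau {P P' : Proc} (h : Step P .tau P') :
    ∃ η X Y s, canonC P = (.pre η X) ::ₘ (.pre η.co Y) ::ₘ s ∧
      canonC P' = canonC X + canonC Y + s := by
  generalize hμ : Lab.tau = μ at h
  induction h with
  | pre η' B => cases hμ
  | @syn P1 P1' Q1 Q1' η0 hA hB ih1 ih2 =>
    obtain ⟨X, s1, e1, e2⟩ := canonC_of_step_act hA
    obtain ⟨Y, s2, f1, f2⟩ := canonC_of_step_act hB
    refine ⟨η0, X, Y, s1 + s2, ?_, ?_⟩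
    · rw [canonC_par, e1, f1, mcons_eq, mcons_eq, mcons_eq, mcons_eq]; abel
    · rw [canonC_par, e2, f2]; abel
  | parL Q _ ih =>
    obtain ⟨η, X, Y, s, h1, h2⟩ := ih hμ
    refine ⟨η, X, Y, s + canonC Q, ?_, ?_⟩
    · rw [canonC_par, h1, mcons_eq, mcons_eq, mcons_eq, mcons_eq]; abel
    · rw [canonC_par, h2]; abel
  | parR Q _ ih =>
    obtain ⟨η, X, Y, s, h1, h2⟩ := ih hμ
    refine ⟨η, X, Y, s + canonC Q, ?_, ?_⟩
    · rw [canonC_par, h1, mcons_eq, mcons_eq, mcons_eq, mcons_eq]; abel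
    · rw [canonC_par, h2]; abel

lemma step_act_of_canonC {P : Proc} {η : Act} {X : Proc} {s : Multiset Proc}
    (h : canonC P = (.pre η X) ::ₘ s) :
    ∃ P', Step P (.act η) P' ∧ canonC P' = canonC X + s := by
  induction P generalizing s with
  | nil => exact absurd h.symm (Multiset.cons_ne_zero)
  | pre η' B ih =>
    rw [canonC_pre] at h
    rw [Multiset.singleton_eq_cons_iff] at h
    obtain ⟨he, hs⟩ := h
    injection he with he1 he2
    subst hs he1
    refine ⟨B, Step.pre _ _, ?_⟩
    rw [← he2, canonC_norm, add_zero]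
  | par A B ihA ihB =>
    rw [canonC_par] at h
    have hmem : (Proc.pre η X) ∈ canonC A + canonC B := by
      rw [h]; exact Multiset.mem_cons_self _ _
    rw [Multiset.mem_add] at hmem
    rcases hmem with hm | hm
    · obtain ⟨e, hA⟩ : ∃ e, canonC A = (Proc.pre η X) ::ₘ e :=
        ⟨_, (Multiset.cons_erase hm).symm⟩
      have hs : s = e + canonC B := by
        rw [← Multiset.cons_inj_right (Proc.pre η X), ← h, hA, Multiset.cons_add]
      obtain ⟨A', hstep, hA'⟩ := ihA hA
      refine ⟨.par A' B, Step.parL _ hstep, ?_⟩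
      rw [canonC_par, hA', hs]; abel
    · obtain ⟨e, hB⟩ : ∃ e, canonC B = (Proc.pre η X) ::ₘ e :=
        ⟨_, (Multiset.cons_erase hm).symm⟩
      have hs : s = canonC A + e := by
        rw [← Multiset.cons_inj_right (Proc.pre η X), ← h, hB, mcons_eq, mcons_eq]
        abel
      obtain ⟨B', hstep, hB'⟩ := ihB hB
      refine ⟨.par A B', Step.parR _ hstep, ?_⟩
      rw [canonC_par, hB', hs]; abel

lemma step_tau_of_canonC {P : Proc} {η : Act} {X Y : Proc} {s : Multiset Proc}
    (h : canonC P = (.pre η X) ::ₘ (.pre η.co Y) ::ₘ s) :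
    ∃ P', Step P .tau P' ∧ canonC P' = canonC X + canonC Y + s := by
  induction P generalizing s with
  | nil => exact absurd h.symm (Multiset.cons_ne_zero)
  | pre η' B ih =>
    exfalso
    rw [canonC_pre] at h
    have := congrArg Multiset.card h
    simp at this
  | par A B ihA ihB =>
    rw [canonC_par] at h
    have hmem : (Proc.pre η X) ∈ canonC A + canonC B := by
      rw [h]; exact Multiset.mem_cons_self _ _
    rw [Multiset.mem_add] at hmem
    -- helper facts
    rcases hmem with hm | hm
    · obtain ⟨e, hA⟩ : ∃ e, canonC A = (Proc.pre η X) ::ₘ e :=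
        ⟨_, (Multiset.cons_erase hm).symm⟩
      have h' : (Proc.pre η.co Y) ::ₘ s = e + canonC B := by
        rw [← Multiset.cons_inj_right (Proc.pre η X), ← h, hA, Multiset.cons_add]
      have hmem2 : (Proc.pre η.co Y) ∈ e + canonC B := by
        rw [← h']; exact Multiset.mem_cons_self _ _
      rw [Multiset.mem_add] at hmem2
      rcases hmem2 with hm2 | hm2
      · -- both in A
        obtain ⟨f, hA2⟩ : ∃ f, e = (Proc.pre η.co Y) ::ₘ f :=
          ⟨_, (Multiset.cons_erase hm2).symm⟩
        have hs : s = f + canonC B := by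
          rw [← Multiset.cons_inj_right (Proc.pre η.co Y), h', hA2, Multiset.cons_add]
        obtain ⟨A', hstep, hA'⟩ := ihA (by rw [hA, hA2])
        refine ⟨.par A' B, Step.parL _ hstep, ?_⟩
        rw [canonC_par, hA', hs]; abel
      · -- X in A, Y in B
        obtain ⟨f, hB2⟩ : ∃ f, canonC B = (Proc.pre η.co Y) ::ₘ f :=
          ⟨_, (Multiset.cons_erase hm2).symm⟩
        have hs : s = e + f := by
          rw [← Multiset.cons_inj_right (Proc.pre η.co Y), h', hB2, mcons_eq, mcons_eq]
          abel
        obtain ⟨A', hstepA, hA'⟩ := step_act_of_canonC hA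
        obtain ⟨B', hstepB, hB'⟩ := step_act_of_canonC hB2
        refine ⟨.par A' B', Step.syn hstepA hstepB, ?_⟩
        rw [canonC_par, hA', hB', hs]; abel
    · obtain ⟨e, hB⟩ : ∃ e, canonC B = (Proc.pre η X) ::ₘ e :=
        ⟨_, (Multiset.cons_erase hm).symm⟩
      have h' : (Proc.pre η.co Y) ::ₘ s = canonC A + e := by
        rw [← Multiset.cons_inj_right (Proc.pre η X), ← h, hB, mcons_eq, mcons_eq]
        abel
      have hmem2 : (Proc.pre η.co Y) ∈ canonC A + e := by
        rw [← h']; exact Multiset.mem_cons_self _ _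
      rw [Multiset.mem_add] at hmem2
      rcases hmem2 with hm2 | hm2
      · -- Y in A, X in B
        obtain ⟨f, hA2⟩ : ∃ f, canonC A = (Proc.pre η.co Y) ::ₘ f :=
          ⟨_, (Multiset.cons_erase hm2).symm⟩
        have hs : s = f + e := by
          rw [← Multiset.cons_inj_right (Proc.pre η.co Y), h', hA2, Multiset.cons_add]
        obtain ⟨A', hstepA, hA'⟩ := step_act_of_canonC hA2
        obtain ⟨B', hstepB, hB'⟩ := step_act_of_canonC hB
        have hstepB' : Step B (.act η.co.co) B' := by rw [Act.co_co]; exact hstepB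
        have hsyn : Step (.par A B) .tau (.par A' B') := Step.syn hstepA hstepB'
        refine ⟨.par A' B', hsyn, ?_⟩
        rw [canonC_par, hA', hB', hs]; abel
      · -- both in B
        obtain ⟨f, hB2⟩ : ∃ f, e = (Proc.pre η.co Y) ::ₘ f :=
          ⟨_, (Multiset.cons_erase hm2).symm⟩
        have hs : s = canonC A + f := by
          rw [← Multiset.cons_inj_right (Proc.pre η.co Y), h', hB2, mcons_eq, mcons_eq]
          abel
        obtain ⟨B', hstep, hB'⟩ := ihB (by rw [hB, hB2])
        refine ⟨.par A B', Step.parR _ hstep, ?_⟩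
        rw [canonC_par, hB', hs]; abel

/-- Transitions transfer across canonC-equality. -/
lemma step_transfer {P Q : Proc} {μ : Lab} {P' : Proc}
    (h : canonC P = canonC Q) (hs : Step P μ P') :
    ∃ Q', Step Q μ Q' ∧ canonC P' = canonC Q' := by
  cases μ with
  | act η =>
    obtain ⟨X, s, h1, h2⟩ := canonC_of_step_act hs
    obtain ⟨Q', hq, hq2⟩ := step_act_of_canonC (by rw [← h, h1])
    exact ⟨Q', hq, by rw [h2, hq2]⟩
  | tau =>
    obtain ⟨η, X, Y, s, h1, h2⟩ := canonC_of_step_tau hs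
    obtain ⟨Q', hq, hq2⟩ := step_tau_of_canonC (by rw [← h, h1])
    exact ⟨Q', hq, by rw [h2, hq2]⟩

/- ===================== Bisimilarity toolkit ===================== -/

lemma bisim_of_canonC {P Q : Proc} (h : canonC P = canonC Q) : Bisim P Q := by
  refine ⟨fun A B => canonC A = canonC B, ⟨fun A B hab => hab.symm, ?_⟩, h⟩
  intro A B μ A' hab hs
  obtain ⟨B', hb, he⟩ := step_transfer hab hs
  exact ⟨B', hb, he⟩

lemma SC.bisim {P Q : Proc} (h : SC P Q) : Bisim P Q := bisim_of_canonC h.canonC_eq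

lemma bisim_refl (P : Proc) : Bisim P P := bisim_of_canonC rfl

lemma bisim_symm {P Q : Proc} (h : Bisim P Q) : Bisim Q P := by
  obtain ⟨R, hR, hpq⟩ := h
  exact ⟨R, hR, hR.1 _ _ hpq⟩

lemma bisim_step {P Q : Proc} {μ : Lab} {P' : Proc} (h : Bisim P Q) (hs : Step P μ P') :
    ∃ Q', Step Q μ Q' ∧ Bisim P' Q' := by
  obtain ⟨R, hR, hpq⟩ := h
  obtain ⟨Q', hq, hr⟩ := hR.2 _ _ _ _ hpq hs
  exact ⟨Q', hq, ⟨R, hR, hr⟩⟩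

lemma isBisim_bisim : IsBisim Bisim :=
  ⟨fun _ _ => bisim_symm, fun _ _ _ _ => bisim_step⟩

lemma bisim_trans {P Q R : Proc} (h1 : Bisim P Q) (h2 : Bisim Q R) : Bisim P R := by
  refine ⟨fun A C => ∃ B, Bisim A B ∧ Bisim B C, ⟨?_, ?_⟩, Q, h1, h2⟩
  · rintro A C ⟨B, hab, hbc⟩
    exact ⟨B, bisim_symm hbc, bisim_symm hab⟩
  · rintro A C μ A' ⟨B, hab, hbc⟩ hs
    obtain ⟨B', hsb, hab'⟩ := bisim_step hab hs
    obtain ⟨C', hsc, hbc'⟩ := bisim_step hbc hsb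
    exact ⟨C', hsc, B', hab', hbc'⟩

lemma bisim_par {A A' B B' : Proc} (h1 : Bisim A A') (h2 : Bisim B B') :
    Bisim (.par A B) (.par A' B') := by
  refine ⟨fun X Y => ∃ A B A' B', X = .par A B ∧ Y = .par A' B' ∧ Bisim A A' ∧ Bisim B B',
    ⟨?_, ?_⟩, A, B, A', B', rfl, rfl, h1, h2⟩
  · rintro X Y ⟨A, B, A', B', rfl, rfl, ha, hb⟩
    exact ⟨A', B', A, B, rfl, rfl, bisim_symm ha, bisim_symm hb⟩
  · rintro X Y μ X' ⟨A, B, A', B', rfl, rfl, ha, hb⟩ hs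
    cases hs with
    | parL _ h =>
      obtain ⟨A2, hs2, ha2⟩ := bisim_step ha h
      exact ⟨_, Step.parL _ hs2, _, _, _, _, rfl, rfl, ha2, hb⟩
    | parR _ h =>
      obtain ⟨B2, hs2, hb2⟩ := bisim_step hb h
      exact ⟨_, Step.parR _ hs2, _, _, _, _, rfl, rfl, ha, hb2⟩
    | syn hA hB =>
      obtain ⟨A2, hs2, ha2⟩ := bisim_step ha hA
      obtain ⟨B2, hs3, hb2⟩ := bisim_step hb hB
      exact ⟨_, Step.syn hs2 hs3, _, _, _, _, rfl, rfl, ha2, hb2⟩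

lemma bisim_pre (η : Act) {A B : Proc} (h : Bisim A B) : Bisim (.pre η A) (.pre η B) := by
  refine ⟨fun X Y => (∃ η A B, X = .pre η A ∧ Y = .pre η B ∧ Bisim A B) ∨ Bisim X Y,
    ⟨?_, ?_⟩, .inl ⟨η, A, B, rfl, rfl, h⟩⟩
  · rintro X Y (⟨η, A, B, rfl, rfl, hab⟩ | hxy)
    · exact .inl ⟨η, B, A, rfl, rfl, bisim_symm hab⟩
    · exact .inr (bisim_symm hxy)
  · rintro X Y μ X' (⟨η, A, B, rfl, rfl, hab⟩ | hxy) hs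
    · cases hs with
      | pre => exact ⟨B, Step.pre _ _, .inr hab⟩
    · obtain ⟨Y', hy, h'⟩ := bisim_step hxy hs
      exact ⟨Y', hy, .inr h'⟩

lemma canonC_pow (η : Act) (B : Proc) (k : ℕ) :
    canonC (pow (.pre η B) k) = Multiset.replicate k (.pre η (cnorm B)) := by
  induction k with
  | zero => rfl
  | succ n ih =>
    show canonC (.par (.pre η B) (pow (.pre η B) n)) = _
    rw [canonC_par, ih, canonC_pre, Multiset.replicate_succ, mcons_eq]

/-- Soundness of the distribution law. -/
lemma bisim_head (η : Act) (P : Proc) (k : ℕ) :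
    Bisim (.pre η (.par P (pow (.pre η P) k))) (pow (.pre η P) (k+1)) := by
  classical
  set pat : Proc → Proc → Prop :=
    fun U V => ∃ η P k, U = Proc.pre η (.par P (pow (.pre η P) k)) ∧
      V = pow (.pre η P) (k+1) with hpat
  have key : ∀ U V μ U', pat U V → Step U μ U' →
      ∃ V', Step V μ V' ∧ canonC U' = canonC V' := by
    rintro U V μ U' ⟨η, P, k, rfl, rfl⟩ hs
    cases hs with
    | pre =>
      have hdec : canonC (pow (.pre η P) (k+1)) =
          (Proc.pre η (cnorm P)) ::ₘ Multiset.replicate k (.pre η (cnorm P)) := by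
        rw [canonC_pow, Multiset.replicate_succ]
      obtain ⟨V', hv, hv2⟩ := step_act_of_canonC hdec
      refine ⟨V', hv, ?_⟩
      rw [hv2, canonC_par, canonC_pow, canonC_norm]
  have key2 : ∀ U V μ V', pat U V → Step V μ V' →
      ∃ U', Step U μ U' ∧ canonC U' = canonC V' := by
    rintro U V μ V' ⟨η, P, k, rfl, rfl⟩ hs
    cases μ with
    | act η' =>
      obtain ⟨X, s, h1, h2⟩ := canonC_of_step_act hs
      rw [canonC_pow] at h1
      have hmem : (Proc.pre η' X) ∈ Multiset.replicate (k+1) (Proc.pre η (cnorm P)) := by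
        rw [h1]; exact Multiset.mem_cons_self _ _
      have heq := Multiset.eq_of_mem_replicate hmem
      have hs' : s = Multiset.replicate k (Proc.pre η (cnorm P)) := by
        rw [← Multiset.cons_inj_right (Proc.pre η' X), ← h1, heq, Multiset.replicate_succ]
      injection heq with e1 e2
      subst e1
      refine ⟨.par P (pow (.pre η' P) k), Step.pre _ _, ?_⟩
      rw [h2, e2, hs', canonC_par, canonC_pow, canonC_norm]
    | tau =>
      exfalso
      obtain ⟨η0, X, Y, s, h1, h2⟩ := canonC_of_step_tau hs
      have hmem1 : (Proc.pre η0 X) ∈ canonC (pow (.pre η P) (k+1)) := by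
        rw [h1]; exact Multiset.mem_cons_self _ _
      have hmem2 : (Proc.pre η0.co Y) ∈ canonC (pow (.pre η P) (k+1)) := by
        rw [h1]; exact Multiset.mem_cons_of_mem (Multiset.mem_cons_self _ _)
      rw [canonC_pow] at hmem1 hmem2
      have e1 := Multiset.eq_of_mem_replicate hmem1
      have e2 := Multiset.eq_of_mem_replicate hmem2
      injection e1 with e1a _
      injection e2 with e2a _
      rw [← e1a] at e2a
      exact Act.co_ne η0 e2a
  refine ⟨fun U V => canonC U = canonC V ∨ pat U V ∨ pat V U, ⟨?_, ?_⟩,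
    .inr (.inl ⟨η, P, k, rfl, rfl⟩)⟩
  · rintro U V (h | h | h)
    · exact .inl h.symm
    · exact .inr (.inr h)
    · exact .inr (.inl h)
  · rintro U V μ U' (h | h | h) hs
    · obtain ⟨V', hv, he⟩ := step_transfer h hs
      exact ⟨V', hv, .inl he⟩
    · obtain ⟨V', hv, he⟩ := key _ _ _ _ h hs
      exact ⟨V', hv, .inl he⟩
    · obtain ⟨V', hv, he⟩ := key2 _ _ _ _ h hs
      exact ⟨V', hv, .inl he.symm⟩

/- ===================== Soundness of rewriting ===================== -/

lemma RW.bisim {P P' : Proc} (h : RW P P') : Bisim P P' := by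
  induction h with
  | head hk => exact bisim_head _ _ _
  | pre η _ ih => exact bisim_pre η ih
  | parL Q _ ih => exact bisim_par ih (bisim_refl Q)
  | parR P _ ih => exact bisim_par (bisim_refl P) ih
  | congr h1 _ h2 ih => exact bisim_trans h1.bisim (bisim_trans ih h2.bisim)

lemma Rws.bisim {P P' : Proc} (h : Rws P P') : Bisim P P' := by
  induction h with
  | refl => exact bisim_refl _
  | tail _ h ih => exact bisim_trans ih h.bisim

/- ===================== Termination ===================== -/

/-- Depth-weighted prefix count. -/
def Dm : Proc → ℕ
  | .nil => 0
  | .pre η P => (Proc.pre η P).size + Dm P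
  | .par P Q => Dm P + Dm Q

lemma SC.size_eq {P Q : Proc} (h : SC P Q) : P.size = Q.size := by
  induction h with
  | refl => rfl
  | symm _ ih => exact ih.symm
  | trans _ _ ih1 ih2 => exact ih1.trans ih2
  | comm P Q => simp [Proc.size]; omega
  | assoc P Q R => simp [Proc.size]; omega
  | unit P => simp [Proc.size]
  | pre η _ ih => simp [Proc.size, ih]
  | par _ _ ih1 ih2 => simp [Proc.size, ih1, ih2]

lemma SC.dm_eq {P Q : Proc} (h : SC P Q) : Dm P = Dm Q := by
  induction h with
  | refl => rfl
  | symm _ ih => exact ih.symm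
  | trans _ _ ih1 ih2 => exact ih1.trans ih2
  | comm P Q => simp [Dm]; omega
  | assoc P Q R => simp [Dm]; omega
  | unit P => simp [Dm]
  | pre η h ih => simp [Dm, Proc.size, ih, h.size_eq]
  | par _ _ ih1 ih2 => simp [Dm, ih1, ih2]

lemma size_pow (c : Proc) (k : ℕ) : (pow c k).size = k * c.size := by
  induction k with
  | zero => simp [pow, Proc.size]
  | succ n ih => show (Proc.par c (pow c n)).size = _; simp [Proc.size, ih]; ring

lemma dm_pow (c : Proc) (k : ℕ) : Dm (pow c k) = k * Dm c := by
  induction k with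
  | zero => simp [pow, Dm]
  | succ n ih => show Dm (.par c (pow c n)) = _; simp [Dm, ih]; ring

lemma RW.size_eq {P P' : Proc} (h : RW P P') : P.size = P'.size := by
  induction h with
  | @head η B k hk =>
    simp [Proc.size, size_pow]; ring
  | pre η _ ih => simp [Proc.size, ih]
  | parL Q _ ih => simp [Proc.size, ih]
  | parR P _ ih => simp [Proc.size, ih]
  | congr h1 _ h2 ih => rw [h1.size_eq, ih, h2.size_eq]

lemma RW.dm_lt {P P' : Proc} (h : RW P P') : Dm P' < Dm P := by
  induction h with
  | @head η B k hk =>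
    have e1 : Dm (pow (.pre η B) (k+1)) = (k+1) * (1 + B.size + Dm B) := by
      rw [dm_pow]; simp [Dm, Proc.size]; try ring
    have e2 : Dm (.pre η (.par B (pow (.pre η B) k))) =
        1 + B.size + k * (1 + B.size) + Dm B + k * (1 + B.size + Dm B) := by
      simp [Dm, Proc.size, size_pow, dm_pow]; try ring
    rw [e1, e2]
    nlinarith [hk]
  | pre η h ih => simp only [Dm, Proc.size]; rw [← h.size_eq]; omega
  | parL Q _ ih => simp [Dm]; omega
  | parR P _ ih => simp [Dm]; omega
  | congr h1 _ h2 ih => rw [h1.dm_eq, ← h2.dm_eq]; exact ih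

lemma exists_nf (P : Proc) : ∃ N, Rws P N ∧ NF N := by
  classical
  by_cases h : NF P
  · exact ⟨P, .refl, h⟩
  · rw [NF, not_not] at h
    obtain ⟨P', hP'⟩ := h
    have : Dm P' < Dm P := hP'.dm_lt
    obtain ⟨N, h1, h2⟩ := exists_nf P'
    exact ⟨N, .head hP' h1, h2⟩
termination_by Dm P
decreasing_by exact this

/- ===================== Renaming commutes with rewriting ===================== -/

lemma SC.rename {P Q : Proc} (h : SC P Q) (σ : ℕ → ℕ) :
    SC (P.rename σ) (Q.rename σ) := by
  induction h with
  | refl => exact .refl _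
  | symm _ ih => exact .symm ih
  | trans _ _ ih1 ih2 => exact .trans ih1 ih2
  | comm P Q => exact .comm _ _
  | assoc P Q R => exact .assoc _ _ _
  | unit P => exact .unit _
  | pre η _ ih => exact .pre _ ih
  | par _ _ ih1 ih2 => exact .par ih1 ih2

lemma rename_pow (c : Proc) (k : ℕ) (σ : ℕ → ℕ) :
    (pow c k).rename σ = pow (c.rename σ) k := by
  induction k with
  | zero => rfl
  | succ n ih => show Proc.rename σ (.par c (pow c n)) = _; simp [Proc.rename, ih]; rfl

lemma RW.rename {P P' : Proc} (h : RW P P') (σ : ℕ → ℕ) :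
    RW (P.rename σ) (P'.rename σ) := by
  induction h with
  | @head η B k hk =>
    show RW (.pre (η.rename σ) (.par (B.rename σ) ((pow (.pre η B) k).rename σ)))
      ((pow (.pre η B) (k+1)).rename σ)
    rw [rename_pow, rename_pow]
    exact RW.head hk
  | pre η _ ih => exact .pre _ ih
  | parL Q _ ih => exact .parL _ ih
  | parR P _ ih => exact .parR _ ih
  | congr h1 _ h2 ih => exact .congr (h1.rename σ) ih (h2.rename σ)

lemma Rws.rename {P P' : Proc} (h : Rws P P') (σ : ℕ → ℕ) :
    Rws (P.rename σ) (P'.rename σ) := by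
  induction h with
  | refl => exact .refl
  | tail _ h ih => exact .tail ih (h.rename σ)

/- ===================== Normal forms via components ===================== -/

/-- A component enabling a rewrite. -/
def Bad (c : Proc) : Prop :=
  ∃ η X, c = .pre η X ∧
    ((∃ X', RW X X') ∨ ∃ Y k, 1 ≤ k ∧ SC X (.par Y (pow (.pre η Y) k)))

lemma bad_of_rw {P P' : Proc} (h : RW P P') : ∃ c ∈ canonC P, Bad c := by
  induction h with
  | @head η B k hk =>
    refine ⟨.pre η (cnorm (.par B (pow (.pre η B) k))), ?_, ?_⟩
    · rw [canonC_pre]; exact Multiset.mem_singleton_self _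
    · refine ⟨η, _, rfl, .inr ⟨B, k, hk, ?_⟩⟩
      exact .symm (sc_cnorm _)
  | @pre B B' η h ih =>
    refine ⟨.pre η (cnorm B), ?_, ?_⟩
    · rw [canonC_pre]; exact Multiset.mem_singleton_self _
    · exact ⟨η, _, rfl, .inl ⟨B', .congr (.symm (sc_cnorm B)) h (.refl _)⟩⟩
  | parL Q _ ih =>
    obtain ⟨c, hc, hb⟩ := ih
    exact ⟨c, by rw [canonC_par, Multiset.mem_add]; exact .inl hc, hb⟩
  | parR P _ ih =>
    obtain ⟨c, hc, hb⟩ := ih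
    exact ⟨c, by rw [canonC_par, Multiset.mem_add]; exact .inr hc, hb⟩
  | congr h1 _ h2 ih =>
    obtain ⟨c, hc, hb⟩ := ih
    exact ⟨c, by rw [h1.canonC_eq]; exact hc, hb⟩

lemma rw_of_bad {P c : Proc} (hc : c ∈ canonC P) (hb : Bad c) : ∃ P', RW P P' := by
  obtain ⟨η, X, rfl, hbad⟩ := hb
  -- extract the component
  obtain ⟨e, he⟩ : ∃ e, canonC P = (Proc.pre η X) ::ₘ e := ⟨_, (Multiset.cons_erase hc).symm⟩
  set R : Proc := ofList (e.sort (· ≤ ·)) with hR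
  have hcR : canonC R = e := by
    have : ∀ d ∈ e, canonC d = {d} := by
      intro d hd
      refine canonC_self (P := P) d ?_
      rw [he]; exact Multiset.mem_cons_of_mem hd
    rw [hR, canonC_ofList]
    calc ((e.sort (· ≤ ·)).map canonC).sum = (e.map canonC).sum := by
          rw [← Multiset.sum_coe, ← Multiset.map_coe, Multiset.sort_eq]
      _ = (e.map (fun d => ({d} : Multiset Proc))).sum := by rw [Multiset.map_congr rfl this]
      _ = e := by
          induction e using Multiset.induction with
          | empty => simp
          | cons a s ihs => simp [ihs]
  have hsc : SC P (.par (.pre η X) R) := by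
    apply sc_of_canonC
    rw [canonC_par, canonC_pre, he, hcR, mcons_eq]
    congr 1
    rw [Multiset.singleton_inj]
    congr 1
    exact (body_norm_of_mem hc rfl).symm
  rcases hbad with ⟨X', hX'⟩ | ⟨Y, k, hk, hscX⟩
  · exact ⟨_, .congr hsc (.parL R (.pre η hX')) (.refl _)⟩
  · refine ⟨_, .congr hsc (.parL R (.congr (.pre η hscX) (.head hk) (.refl _))) (.refl _)⟩

lemma nf_iff {P : Proc} : NF P ↔ ∀ c ∈ canonC P, ¬ Bad c := by
  constructor
  · intro h c hc hb
    exact h (rw_of_bad hc hb)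
  · rintro h ⟨P', hP'⟩
    obtain ⟨c, hc, hb⟩ := bad_of_rw hP'
    exact h c hc hb

lemma nf_body {P c : Proc} {η X} (hP : NF P) (hc : c ∈ canonC P) (he : c = .pre η X) :
    NF X := by
  rw [nf_iff]
  intro d hd hb
  have := (nf_iff.1 hP) c hc
  apply this
  refine ⟨η, X, he, .inl ?_⟩
  obtain ⟨e, hee⟩ : ∃ e, canonC X = d ::ₘ e := ⟨_, (Multiset.cons_erase hd).symm⟩
  exact rw_of_bad hd hb

lemma nf_no_redex {P c : Proc} {η X} (hP : NF P) (hc : c ∈ canonC P) (he : c = .pre η X)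
    {Y k} (hk : 1 ≤ k) (hsc : SC X (.par Y (pow (.pre η Y) k))) : False :=
  (nf_iff.1 hP) c hc ⟨η, X, he, .inr ⟨Y, k, hk, hsc⟩⟩

/-- NF of a derivative: components of a derivative of an NF process are all good. -/
lemma nf_deriv {P P' : Proc} {η X} {s : Multiset Proc}
    (hdec : canonC P = (.pre η X) ::ₘ s) (hP : NF P)
    (hdec' : canonC P' = canonC X + s) : NF P' := by
  rw [nf_iff]
  intro c hc
  rw [hdec', Multiset.mem_add] at hc
  rcases hc with hc | hc
  · have hX : NF X := nf_body hP (by rw [hdec]; exact Multiset.mem_cons_self _ _) rfl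
    exact (nf_iff.1 hX) c hc
  · exact (nf_iff.1 hP) c (by rw [hdec]; exact Multiset.mem_cons_of_mem hc)

/- ===================== Completeness: bisimilar NFs have equal components ===================== -/

lemma msize_cons (a : Proc) (s : Multiset Proc) : msize (a ::ₘ s) = a.size + msize s := by
  simp [msize]

lemma msize_add (s t : Multiset Proc) : msize (s + t) = msize s + msize t := by
  simp [msize]

lemma size_drop {Z Z' : Proc} {η : Act} {W : Proc} {u : Multiset Proc}
    (h : canonC Z = (.pre η W) ::ₘ u) (h' : canonC Z' = canonC W + u) :
    Z'.size + 1 = Z.size := by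
  have e1 := size_canonC Z
  rw [h, msize_cons] at e1
  have e2 := size_canonC Z'
  rw [h', msize_add, size_canonC] at e2
  have e3 : (Proc.pre η W).size = 1 + W.size := rfl
  omega

lemma count_canonC_zero {c Z : Proc} (h : Z.size < c.size) : (canonC Z).count c = 0 := by
  rw [Multiset.count_eq_zero]
  intro hm
  have := size_le_of_mem_canonC hm
  omega

lemma exists_max_size (m : Multiset Proc) (h : m ≠ 0) :
    ∃ c ∈ m, ∀ d ∈ m, d.size ≤ c.size := by
  induction m using Multiset.induction with
  | empty => exact absurd rfl h
  | cons a s ih =>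
    by_cases hs : s = 0
    · subst hs
      refine ⟨a, Multiset.mem_cons_self _ _, ?_⟩
      intro d hd
      rcases Multiset.mem_cons.1 hd with h | h
      · subst h; exact le_rfl
      · simp at h
    · obtain ⟨c, hc, hm⟩ := ih hs
      by_cases hac : c.size ≤ a.size
      · refine ⟨a, Multiset.mem_cons_self _ _, ?_⟩
        intro d hd
        rcases Multiset.mem_cons.1 hd with h | h
        · subst h; exact le_rfl
        · exact (hm d h).trans hac
      · refine ⟨c, Multiset.mem_cons_of_mem hc, ?_⟩
        intro d hd
        rcases Multiset.mem_cons.1 hd with h | h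
        · subst h; omega
        · exact hm d h

lemma canonC_zero_of_bisim {P Q : Proc} (h : Bisim P Q) (hP : canonC P = 0) :
    canonC Q = 0 := by
  by_contra h0
  obtain ⟨c, hc⟩ := Multiset.exists_mem_of_ne_zero h0
  obtain ⟨η, X, rfl⟩ := mem_canonC_shape hc
  obtain ⟨u, hu⟩ : ∃ u, canonC Q = (Proc.pre η X) ::ₘ u := ⟨_, (Multiset.cons_erase hc).symm⟩
  obtain ⟨Q', hsQ, _⟩ := step_act_of_canonC hu
  obtain ⟨P', hsP, _⟩ := bisim_step (bisim_symm h) hsQ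
  obtain ⟨X', s', hdec, _⟩ := canonC_of_step_act hsP
  rw [hP] at hdec
  exact Multiset.cons_ne_zero hdec.symm

lemma complete_key (n : ℕ)
    (IH : ∀ P' Q' : Proc, P'.size + Q'.size < n → NF P' → NF Q' → Bisim P' Q' →
      canonC P' = canonC Q')
    {P Q : Proc} (hn : P.size + Q.size ≤ n) (hP : NF P) (hQ : NF Q) (hB : Bisim P Q)
    {η : Act} {X : Proc} (hc : (Proc.pre η X) ∈ canonC P)
    (hmax : ∀ d ∈ canonC P + canonC Q, d.size ≤ (Proc.pre η X).size) :
    canonC P = canonC Q := by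
  classical
  obtain ⟨s, hsP⟩ : ∃ s, canonC P = (Proc.pre η X) ::ₘ s := ⟨_, (Multiset.cons_erase hc).symm⟩
  obtain ⟨P1, hstepP, hP1⟩ := step_act_of_canonC hsP
  obtain ⟨Q1, hstepQ, hB1⟩ := bisim_step hB hstepP
  obtain ⟨Y, t, hsQ, hQ1⟩ := canonC_of_step_act hstepQ
  have hNP1 : NF P1 := nf_deriv hsP hP hP1
  have hNQ1 : NF Q1 := nf_deriv hsQ hQ hQ1
  have hd1 := size_drop hsP hP1
  have hd2 := size_drop hsQ hQ1
  have hlt1 : P1.size + Q1.size < n := by omega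
  have heq1 : canonC X + s = canonC Y + t := by
    rw [← hP1, ← hQ1]; exact IH P1 Q1 hlt1 hNP1 hNQ1 hB1
  by_cases hcd : (Proc.pre η Y) = (Proc.pre η X)
  · -- matching head components
    have hYX : Y = X := by injection hcd
    subst hYX
    have hst : s = t := add_left_cancel heq1
    rw [hsP, hsQ, hst]
  · -- mismatch
    have hdQ : (Proc.pre η Y) ∈ canonC Q := by rw [hsQ]; exact Multiset.mem_cons_self _ _
    have hsize_d : (Proc.pre η Y).size ≤ (Proc.pre η X).size :=
      hmax _ (Multiset.mem_add.2 (.inr hdQ))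
    have epre : ∀ (μ : Act) (Z : Proc), (Proc.pre μ Z).size = 1 + Z.size := fun _ _ => rfl
    have hYsize : Y.size ≤ X.size := by
      have e1 := epre η Y; have e2 := epre η X; omega
    have hXc : X.size < (Proc.pre η X).size := by have := epre η X; omega
    have hcX : (canonC X).count (Proc.pre η X) = 0 := count_canonC_zero hXc
    have hcY : (canonC Y).count (Proc.pre η X) = 0 := by
      refine count_canonC_zero ?_
      have := epre η X; omega
    have hst : s.count (Proc.pre η X) = t.count (Proc.pre η X) := by
      have h0 := congrArg (Multiset.count (Proc.pre η X)) heq1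
      rw [Multiset.count_add, Multiset.count_add, hcX, hcY] at h0
      omega
    have hpP : (canonC P).count (Proc.pre η X) = 1 + s.count (Proc.pre η X) := by
      rw [hsP, Multiset.count_cons_self]; omega
    have hpQ : (canonC Q).count (Proc.pre η X) = t.count (Proc.pre η X) := by
      rw [hsQ, Multiset.count_cons_of_ne (fun h => hcd h.symm)]
    by_cases hq : (Proc.pre η X) ∈ canonC Q
    · -- a copy of the head component is in Q : fire it there
      obtain ⟨u, hu⟩ : ∃ u, canonC Q = (Proc.pre η X) ::ₘ u := ⟨_, (Multiset.cons_erase hq).symm⟩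
      obtain ⟨Q2, hstepQ2, hQ2⟩ := step_act_of_canonC hu
      obtain ⟨P2, hstepP2, hB2⟩ := bisim_step (bisim_symm hB) hstepQ2
      obtain ⟨E, v, hvP, hP2⟩ := canonC_of_step_act hstepP2
      have hNQ2 : NF Q2 := nf_deriv hu hQ hQ2
      have hNP2 : NF P2 := nf_deriv hvP hP hP2
      have hd3 := size_drop hu hQ2
      have hd4 := size_drop hvP hP2
      have hlt2 : Q2.size + P2.size < n := by omega
      have heq2 : canonC X + u = canonC E + v := by
        rw [← hQ2, ← hP2]; exact IH Q2 P2 hlt2 hNQ2 hNP2 hB2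
      by_cases heE : (Proc.pre η E) = (Proc.pre η X)
      · have hEX : X = E := by injection heE with h1 h2; exact h2.symm
        subst hEX
        have huv : u = v := add_left_cancel heq2
        rw [hsP, hu]
        have : canonC P = (Proc.pre η X) ::ₘ v := hvP
        rw [hsP] at this
        have hsv : s = v := (Multiset.cons_inj_right _).1 this
        rw [hsv, huv]
      · exfalso
        have hEsize : E.size < (Proc.pre η X).size := by
          have h1 : (Proc.pre η E) ∈ canonC P := by
            rw [hvP]; exact Multiset.mem_cons_self _ _
          have h2 := hmax _ (Multiset.mem_add.2 (.inl h1))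
          have := epre η E; have := epre η X; omega
        have hcE : (canonC E).count (Proc.pre η X) = 0 := count_canonC_zero hEsize
        have e1 : (canonC Q).count (Proc.pre η X) = 1 + u.count (Proc.pre η X) := by
          rw [hu, Multiset.count_cons_self]; omega
        have e2 : (canonC P).count (Proc.pre η X) = v.count (Proc.pre η X) := by
          rw [hvP, Multiset.count_cons_of_ne (fun h => heE h.symm)]
        have e3 := congrArg (Multiset.count (Proc.pre η X)) heq2
        rw [Multiset.count_add, Multiset.count_add, hcX, hcE] at e3
        omega
    · -- no copy of the head component occurs in Q
      have hq0 : (canonC Q).count (Proc.pre η X) = 0 := Multiset.count_eq_zero.2 hq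
      have hts : t.count (Proc.pre η X) = 0 := by omega
      have hss : s.count (Proc.pre η X) = 0 := by omega
      have hp1 : (canonC P).count (Proc.pre η X) = 1 := by omega
      -- every component of Q equals (pre η Y)
      have hall : ∀ g ∈ canonC Q, g = (Proc.pre η Y) := by
        intro g hg
        obtain ⟨μ, G, rfl⟩ := mem_canonC_shape hg
        obtain ⟨u, hu⟩ : ∃ u, canonC Q = (Proc.pre μ G) ::ₘ u :=
          ⟨_, (Multiset.cons_erase hg).symm⟩
        obtain ⟨Qg, hstepQg, hQg⟩ := step_act_of_canonC hu
        obtain ⟨Pg, hstepPg, hBg⟩ := bisim_step (bisim_symm hB) hstepQg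
        obtain ⟨H, w, hwP, hPg⟩ := canonC_of_step_act hstepPg
        have hNQg : NF Qg := nf_deriv hu hQ hQg
        have hNPg : NF Pg := nf_deriv hwP hP hPg
        have hd3 := size_drop hu hQg
        have hd4 := size_drop hwP hPg
        have hlt2 : Qg.size + Pg.size < n := by omega
        have heqg : canonC G + u = canonC H + w := by
          rw [← hQg, ← hPg]; exact IH Qg Pg hlt2 hNQg hNPg hBg
        have hgc : (Proc.pre μ G) ≠ (Proc.pre η X) := by
          intro h; rw [h] at hg; exact hq hg
        have hu0 : u.count (Proc.pre η X) = 0 := by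
          have h0 := congrArg (Multiset.count (Proc.pre η X)) hu
          rw [hq0, Multiset.count_cons_of_ne (fun h => hgc h.symm)] at h0
          omega
        have hGsize : G.size < (Proc.pre η X).size := by
          have h2 := hmax _ (Multiset.mem_add.2 (.inr hg))
          have := epre μ G; omega
        have hcG : (canonC G).count (Proc.pre η X) = 0 := count_canonC_zero hGsize
        have hHc : (Proc.pre μ H) = (Proc.pre η X) := by
          by_contra hne
          have hHsize : H.size < (Proc.pre η X).size := by
            have h1 : (Proc.pre μ H) ∈ canonC P := by
              rw [hwP]; exact Multiset.mem_cons_self _ _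
            have h2 := hmax _ (Multiset.mem_add.2 (.inl h1))
            have := epre μ H; omega
          have hcH : (canonC H).count (Proc.pre η X) = 0 := count_canonC_zero hHsize
          have e2 : (canonC P).count (Proc.pre η X) = w.count (Proc.pre η X) := by
            rw [hwP, Multiset.count_cons_of_ne (fun h => hne h.symm)]
          have e3 := congrArg (Multiset.count (Proc.pre η X)) heqg
          rw [Multiset.count_add, Multiset.count_add, hcG, hcH] at e3
          omega
        have hμ : η = μ := by injection hHc with h1 h2; exact h1.symm
        have hH : X = H := by injection hHc with h1 h2; exact h2.symm
        subst hμ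
        subst hH
        have hws : w = s := by
          have h1 : (Proc.pre η X) ::ₘ w = (Proc.pre η X) ::ₘ s := hwP.symm.trans hsP
          exact (Multiset.cons_inj_right _).1 h1
        rw [hws] at heqg
        -- heqg : canonC G + u = canonC X + s
        have heq2 : canonC G + u = canonC Y + t := heqg.trans heq1
        by_cases hgd : (Proc.pre η G) = (Proc.pre η Y)
        · exact hgd
        · exfalso
          have hgt : (Proc.pre η G) ∈ t := by
            have hgm : (Proc.pre η G) ∈ (Proc.pre η Y) ::ₘ t := by rw [← hsQ]; exact hg
            rcases Multiset.mem_cons.1 hgm with h | h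
            · exact absurd h hgd
            · exact h
          obtain ⟨t', ht'⟩ : ∃ t', t = (Proc.pre η G) ::ₘ t' :=
            ⟨_, (Multiset.cons_erase hgt).symm⟩
          have hu' : u = (Proc.pre η Y) ::ₘ t' := by
            have h1 : (Proc.pre η G) ::ₘ u = (Proc.pre η Y) ::ₘ t := hu.symm.trans hsQ
            rw [ht', Multiset.cons_swap] at h1
            exact (Multiset.cons_inj_right _).1 h1
          have hfin : canonC G + {Proc.pre η Y} = canonC Y + {Proc.pre η G} := by
            have h2 : canonC G + ({Proc.pre η Y} + t') = canonC Y + ({Proc.pre η G} + t') := by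
              rw [Multiset.singleton_add, Multiset.singleton_add, ← hu', ← ht']
              exact heq2
            rw [← add_assoc, ← add_assoc] at h2
            exact add_right_cancel h2
          have hYY : (canonC Y).count (Proc.pre η Y) = 0 := by
            refine count_canonC_zero ?_
            have := epre η Y; omega
          have h3 := congrArg (Multiset.count (Proc.pre η Y)) hfin
          rw [Multiset.count_add, Multiset.count_add, hYY, Multiset.count_singleton_self,
            Multiset.count_singleton] at h3
          rw [if_neg (fun h => hgd h.symm)] at h3
          omega
      have htall : ∀ g ∈ t, g = (Proc.pre η Y) := fun g hg =>
        hall g (by rw [hsQ]; exact Multiset.mem_cons_of_mem hg)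
      have htrep : t = Multiset.replicate t.card (Proc.pre η Y) :=
        Multiset.eq_replicate_card.2 htall
      by_cases hs0 : s = 0
      · subst hs0
        have heq1' : canonC X = canonC Y + Multiset.replicate t.card (Proc.pre η Y) := by
          rw [← htrep]; simpa using heq1
        by_cases hk : t.card = 0
        · exfalso
          rw [hk, Multiset.replicate_zero, add_zero] at heq1'
          have hXn : cnorm X = X := body_norm_of_mem hc rfl
          have hYn : cnorm Y = Y := body_norm_of_mem hdQ rfl
          have hXY : X = Y := by rw [← hXn, ← hYn]; exact cnorm_eq_of_canonC heq1'
          exact hcd (by rw [hXY])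
        · exfalso
          have hk1 : 1 ≤ t.card := Nat.one_le_iff_ne_zero.2 hk
          have hYn : cnorm Y = Y := body_norm_of_mem hdQ rfl
          have hpow : canonC (pow (Proc.pre η Y) t.card) =
              Multiset.replicate t.card (Proc.pre η Y) := by
            rw [canonC_pow, hYn]
          have hscX : SC X (.par Y (pow (.pre η Y) t.card)) := by
            apply sc_of_canonC
            rw [canonC_par, hpow, heq1']
          exact nf_no_redex hP hc rfl hk1 hscX
      · exfalso
        obtain ⟨a, ha⟩ := Multiset.exists_mem_of_ne_zero hs0
        have haP : a ∈ canonC P := by rw [hsP]; exact Multiset.mem_cons_of_mem ha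
        obtain ⟨ν, A, rfl⟩ := mem_canonC_shape haP
        obtain ⟨w0, hw0⟩ : ∃ w0, canonC P = (Proc.pre ν A) ::ₘ w0 :=
          ⟨_, (Multiset.cons_erase haP).symm⟩
        have hac : (Proc.pre ν A) ≠ (Proc.pre η X) := by
          intro h
          rw [h] at ha
          have := Multiset.count_pos.2 ha
          omega
        have hw0c : w0.count (Proc.pre η X) = 1 := by
          have h0 := congrArg (Multiset.count (Proc.pre η X)) hw0
          rw [hp1, Multiset.count_cons_of_ne (fun h => hac h.symm)] at h0
          omega
        obtain ⟨Pa, hstepPa, hPa⟩ := step_act_of_canonC hw0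
        obtain ⟨Qa, hstepQa, hBa⟩ := bisim_step hB hstepPa
        obtain ⟨W, z, hzQ, hQa⟩ := canonC_of_step_act hstepQa
        have hNPa : NF Pa := nf_deriv hw0 hP hPa
        have hNQa : NF Qa := nf_deriv hzQ hQ hQa
        have hd3 := size_drop hw0 hPa
        have hd4 := size_drop hzQ hQa
        have hlt3 : Pa.size + Qa.size < n := by omega
        have hWd : (Proc.pre ν W) = (Proc.pre η Y) :=
          hall _ (by rw [hzQ]; exact Multiset.mem_cons_self _ _)
        have hν : η = ν := by injection hWd with h1 h2; exact h1.symm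
        have hW : Y = W := by injection hWd with h1 h2; exact h2.symm
        subst hν
        subst hW
        have hzt : z = t := by
          have h1 : (Proc.pre η Y) ::ₘ z = (Proc.pre η Y) ::ₘ t := hzQ.symm.trans hsQ
          exact (Multiset.cons_inj_right _).1 h1
        have heqa : canonC A + w0 = canonC Y + z := by
          rw [← hPa, ← hQa]; exact IH Pa Qa hlt3 hNPa hNQa hBa
        have hAsize : A.size < (Proc.pre η X).size := by
          have h2 := hmax _ (Multiset.mem_add.2 (.inl haP))
          have := epre η A; omega
        have hcA : (canonC A).count (Proc.pre η X) = 0 := count_canonC_zero hAsize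
        have h0 := congrArg (Multiset.count (Proc.pre η X)) heqa
        rw [Multiset.count_add, Multiset.count_add, hcA, hcY, hzt] at h0
        omega

lemma complete_canonC :
    ∀ n, ∀ P Q : Proc, P.size + Q.size ≤ n → NF P → NF Q → Bisim P Q →
      canonC P = canonC Q := by
  intro n
  induction n using Nat.strong_induction_on with
  | _ n IHn =>
    intro P Q hn hP hQ hB
    have IH : ∀ P' Q' : Proc, P'.size + Q'.size < n → NF P' → NF Q' → Bisim P' Q' →
        canonC P' = canonC Q' := by
      intro P' Q' h hp hq hb
      exact IHn _ h P' Q' le_rfl hp hq hb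
    by_cases hPz : canonC P = 0
    · rw [hPz, (canonC_zero_of_bisim hB hPz)]
    · by_cases hQz : canonC Q = 0
      · exact absurd (canonC_zero_of_bisim (bisim_symm hB) hQz) hPz
      · have hM : canonC P + canonC Q ≠ 0 := by
          intro h
          exact hPz (Multiset.le_zero.1 (h ▸ Multiset.le_add_right _ _))
        obtain ⟨c, hcM, hmax⟩ := exists_max_size _ hM
        rcases Multiset.mem_add.1 hcM with hcP | hcQ
        · obtain ⟨η, X, rfl⟩ := mem_canonC_shape hcP
          exact complete_key n IH hn hP hQ hB hcP hmax
        · obtain ⟨η, X, rfl⟩ := mem_canonC_shape hcQ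
          refine (complete_key n ?_ (by omega) hQ hP (bisim_symm hB) hcQ ?_).symm
          · intro P' Q' h hp hq hb
            exact IH P' Q' (by omega) hp hq hb
          · intro d hd
            refine hmax d ?_
            rw [Multiset.mem_add] at hd ⊢
            tauto

/- ===================== Main theorem ===================== -/

/-- strong bisimilarity is closed under name substitution
    in microCCS. -/
theorem bisim_substitution_closed {P Q : Proc} (h : Bisim P Q)
    (σ : ℕ → ℕ) : Bisim (P.rename σ) (Q.rename σ) := by
  obtain ⟨NP, hr1, hn1⟩ := exists_nf P
  obtain ⟨NQ, hr2, hn2⟩ := exists_nf Q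
  have hBN : Bisim NP NQ :=
    bisim_trans (bisim_symm hr1.bisim) (bisim_trans h hr2.bisim)
  have hce : canonC NP = canonC NQ :=
    complete_canonC (NP.size + NQ.size) NP NQ le_rfl hn1 hn2 hBN
  have hsc : SC (NP.rename σ) (NQ.rename σ) := (sc_of_canonC hce).rename σ
  exact bisim_trans (Rws.bisim (hr1.rename σ))
    (bisim_trans hsc.bisim (bisim_symm (Rws.bisim (hr2.rename σ))))
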